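/- arXiv:1502.07491 — 3 statements merged into one kernel-verified Lean document; each statement's English description precedes it below -/
import Mathlib

section
/- Define a sequence A : ℕ → ℝ by A₁ = φ/2 and A_{k+1} = ((2k+1)/(2k+2))·(φ − k(4k+1)(4k+3)(4k+4))·A_k, where φ = n(4n+1)(4n+3)(4n+4) for a fixed natural number n ≥ 1. Then A_k > 0 for all 1 ≤ k ≤ n, and A_k = 0 for all k ≥ n+1. -/
/-!
Write `A (k + 1) = r k * A k`. Since `k ↦ k (4k+1)(4k+3)(4k+4)` is strictly increasing
on `k ≥ 0` and `φ` is its value at `n`, the factor `r k` is positive for `1 ≤ k < n` and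
vanishes at `k = n`.
So the sequence stays positive up to `n`, and the zero produced at `n + 1` propagates.
-/

theorem pos_of_eq_mul_of_pos {R : Type*} [Semiring R] [PartialOrder R] [IsStrictOrderedRing R]
    {A r : ℕ → R} {n : ℕ} (h1 : 0 < A 1) (hr : ∀ k, 1 ≤ k → k < n → 0 < r k)
    (hrec : ∀ k, 1 ≤ k → A (k + 1) = r k * A k) :
    ∀ k, 1 ≤ k → k ≤ n → 0 < A k := by
  intro k hk
  induction k, hk using Nat.le_induction with
  | base => exact fun _ => h1
  | succ k hk ih =>
    intro hkn
    rw [hrec k hk]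
    exact mul_pos (hr k hk hkn) (ih (Nat.le_of_succ_le hkn))

theorem eq_zero_of_eq_mul_of_eq_zero {M : Type*} [MulZeroClass M] {A r : ℕ → M} {m : ℕ}
    (hm : A m = 0) (hrec : ∀ k, m ≤ k → A (k + 1) = r k * A k) :
    ∀ k, m ≤ k → A k = 0 := by
  intro k hk
  induction k, hk using Nat.le_induction with
  | base => exact hm
  | succ k hk ih => rw [hrec k hk, ih, mul_zero]

theorem quartic_lt_quartic {a b : ℝ} (ha : 0 ≤ a) (hab : a < b) :
    a * (4 * a + 1) * (4 * a + 3) * (4 * a + 4) < b * (4 * b + 1) * (4 * b + 3) * (4 * b + 4) := by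
  have hb : 0 < b := ha.trans_lt hab
  gcongr

theorem stmt_4 (n : ℕ) (hn : 1 ≤ n) (φ : ℝ)
    (hφ : φ = n * (4 * n + 1) * (4 * n + 3) * (4 * n + 4))
    (A : ℕ → ℝ) (hA1 : A 1 = φ / 2)
    (hrec : ∀ k : ℕ, 1 ≤ k →
      A (k + 1) = ((2 * k + 1) / (2 * k + 2))
        * (φ - k * (4 * k + 1) * (4 * k + 3) * (4 * k + 4)) * A k) :
    (∀ k : ℕ, 1 ≤ k → k ≤ n → 0 < A k) ∧ (∀ k : ℕ, n + 1 ≤ k → A k = 0) := by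
  set r : ℕ → ℝ := fun k =>
    (2 * k + 1) / (2 * k + 2) * (φ - k * (4 * k + 1) * (4 * k + 3) * (4 * k + 4))
  have hr_pos : ∀ k, 1 ≤ k → k < n → 0 < r k := fun k _ hkn => by
    have hgap := quartic_lt_quartic (Nat.cast_nonneg k) (Nat.cast_lt.mpr hkn)
    simp only [r]
    exact mul_pos (by positivity) (by rw [hφ]; linarith)
  have hA_succ_n : A (n + 1) = 0 := by rw [hrec n hn, hφ, sub_self, mul_zero, zero_mul]
  refine ⟨pos_of_eq_mul_of_pos (by rw [hA1, hφ]; positivity) hr_pos hrec, ?_⟩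
  exact eq_zero_of_eq_mul_of_eq_zero hA_succ_n fun k hk => hrec k (by omega)
end

section
/- For every natural number n ≥ 1, the four complex numbers σ₁ = (1−4n−√(1−16n−16n²))/2, σ₂ = (1−4n+√(1−16n−16n²))/2, σ₃ = (5+4n−√(1−16n−16n²))/2, σ₄ = (5+4n+√(1−16n−16n²))/2 are exactly the roots of σ(σ−1)(σ−2)(σ−3) + n(4n+1)(4n+3)(4n+4) = 0, where √ denotes a fixed complex square root of 1−16n−16n². -/
/-!
The quartic splits over any commutative ring as
`(σ² - (1 - 4n) σ + 8n² + 2n) (σ² - (5 + 4n) σ + 8n² + 14n + 6)`, and the two quadratic factors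
have the same discriminant `1 - 16n - 16n²`. The quadratic formula applied to each factor with the
common square root `s` of this discriminant gives the four roots.
-/

section IndicialQuartic

variable {R : Type*} [CommRing R]

theorem indicial_quartic_eq_mul (n σ : R) :
    σ * (σ - 1) * (σ - 2) * (σ - 3) + n * (4 * n + 1) * (4 * n + 3) * (4 * n + 4) =
      (σ ^ 2 - (1 - 4 * n) * σ + (8 * n ^ 2 + 2 * n)) *
        (σ ^ 2 - (5 + 4 * n) * σ + (8 * n ^ 2 + 14 * n + 6)) := by
  ring

theorem discrim_indicial_factor_left (n : R) :
    discrim 1 (-(1 - 4 * n)) (8 * n ^ 2 + 2 * n) = 1 - 16 * n - 16 * n ^ 2 := by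
  rw [discrim]; ring

theorem discrim_indicial_factor_right (n : R) :
    discrim 1 (-(5 + 4 * n)) (8 * n ^ 2 + 14 * n + 6) = 1 - 16 * n - 16 * n ^ 2 := by
  rw [discrim]; ring

end IndicialQuartic

section IndicialRoots

variable {K : Type*} [Field K] [NeZero (2 : K)]

theorem monic_quadratic_eq_zero_iff {b c s : K} (h : discrim 1 (-b) c = s ^ 2) (x : K) :
    x ^ 2 - b * x + c = 0 ↔ x = (b - s) / 2 ∨ x = (b + s) / 2 := by
  rw [sq s] at h
  have hx := quadratic_eq_zero_iff one_ne_zero h x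
  rw [mul_one, neg_neg, ← sq, one_mul, neg_mul, ← sub_eq_add_neg] at hx
  rw [hx, or_comm]

theorem indicial_quartic_eq_zero_iff {n s : K} (hs : s ^ 2 = 1 - 16 * n - 16 * n ^ 2) (σ : K) :
    σ * (σ - 1) * (σ - 2) * (σ - 3) + n * (4 * n + 1) * (4 * n + 3) * (4 * n + 4) = 0 ↔
      σ = (1 - 4 * n - s) / 2 ∨ σ = (1 - 4 * n + s) / 2 ∨
        σ = (5 + 4 * n - s) / 2 ∨ σ = (5 + 4 * n + s) / 2 := by
  rw [indicial_quartic_eq_mul, mul_eq_zero,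
    monic_quadratic_eq_zero_iff ((discrim_indicial_factor_left n).trans hs.symm),
    monic_quadratic_eq_zero_iff ((discrim_indicial_factor_right n).trans hs.symm), or_assoc]

end IndicialRoots

theorem stmt_9_general (n : ℕ) (s : ℂ)
    (hs : s ^ 2 = 1 - 16 * n - 16 * n ^ 2)
    (σ₁ σ₂ σ₃ σ₄ : ℂ)
    (h1 : σ₁ = (1 - 4 * n - s) / 2) (h2 : σ₂ = (1 - 4 * n + s) / 2)
    (h3 : σ₃ = (5 + 4 * n - s) / 2) (h4 : σ₄ = (5 + 4 * n + s) / 2) :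
    ∀ σ : ℂ,
      σ * (σ - 1) * (σ - 2) * (σ - 3)
          + n * (4 * n + 1) * (4 * n + 3) * (4 * n + 4) = 0
        ↔ σ = σ₁ ∨ σ = σ₂ ∨ σ = σ₃ ∨ σ = σ₄ := by
  subst h1 h2 h3 h4
  exact indicial_quartic_eq_zero_iff hs

theorem stmt_9 (n : ℕ) (hn : 1 ≤ n) (s : ℂ)
    (hs : s ^ 2 = 1 - 16 * n - 16 * n ^ 2)
    (σ₁ σ₂ σ₃ σ₄ : ℂ)
    (h1 : σ₁ = (1 - 4 * n - s) / 2) (h2 : σ₂ = (1 - 4 * n + s) / 2)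
    (h3 : σ₃ = (5 + 4 * n - s) / 2) (h4 : σ₄ = (5 + 4 * n + s) / 2) :
    ∀ σ : ℂ,
      σ * (σ - 1) * (σ - 2) * (σ - 3)
          + n * (4 * n + 1) * (4 * n + 3) * (4 * n + 4) = 0
        ↔ σ = σ₁ ∨ σ = σ₂ ∨ σ = σ₃ ∨ σ = σ₄ :=
  stmt_9_general n s hs σ₁ σ₂ σ₃ σ₄ h1 h2 h3 h4
end

section
/- Let c, φ, ψ ∈ ℝ, k ≥ 1 a natural number, l ∈ {1,2,3}, and on ℝ \ {0} define u(x) = c·x⁻⁴ + φ·x⁻ˡ and f(x) = A·x^{−4k} + B·x^{−4k+4−l} with A, B ∈ ℝ. Then the coefficient of x^{−4k−l−1} in u·f' + u'·f/2 − f⁽⁵⁾/4 equals −((8k+l)/2)·φ·A − ((4k−2+l)/4)·(4c − (4k−4+l)(4k−3+l)(4k−1+l)(4k+l))·B. -/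
/-!
Off the origin `u` and `f` are two-term Laurent polynomials, so their derivatives are computed
termwise by `iter_deriv_zpow`; the identity is then the collection of the coefficients of
`x^(-4k-5)`, `x^(-4k-l-1)` and `x^(-4k+3-2l)`.
-/

open Finset

theorem iter_deriv_laurent_binomial {𝕜 : Type*} [NontriviallyNormedField 𝕜] [CompleteSpace 𝕜]
    {g : 𝕜 → 𝕜} {A B : 𝕜} {m₁ m₂ : ℤ} (hg : ∀ x ≠ 0, g x = A * x ^ m₁ + B * x ^ m₂) (n : ℕ)
    {x : 𝕜} (hx : x ≠ 0) :
    deriv^[n] g x = A * (∏ i ∈ range n, ((m₁ : 𝕜) - i)) * x ^ (m₁ - n)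
      + B * (∏ i ∈ range n, ((m₂ : 𝕜) - i)) * x ^ (m₂ - n) := by
  have hEqOn : Set.EqOn g (fun y ↦ A * y ^ m₁ + B * y ^ m₂) {0}ᶜ := fun y hy ↦ hg y hy
  have hzpow (m : ℤ) : ContDiffAt 𝕜 n (fun y : 𝕜 ↦ y ^ m) x :=
    (analyticAt_id.fun_zpow hx).contDiffAt
  rw [← iteratedDeriv_eq_iterate, hEqOn.iteratedDeriv_of_isOpen isOpen_compl_singleton n hx,
    iteratedDeriv_fun_add (contDiffAt_const.mul (hzpow m₁)) (contDiffAt_const.mul (hzpow m₂)),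
    iteratedDeriv_const_mul_field, iteratedDeriv_const_mul_field]
  simp only [iteratedDeriv_eq_iterate, iter_deriv_zpow, mul_assoc]

theorem stmt_18_general (c φ A B : ℝ) (k : ℕ)
    (l : ℕ)
    (u f : ℝ → ℝ)
    (hu : ∀ x : ℝ, x ≠ 0 → u x = c * x ^ (-4 : ℤ) + φ * x ^ (-(l : ℤ)))
    (hf : ∀ x : ℝ, x ≠ 0 →
      f x = A * x ^ (-(4 * (k : ℤ))) + B * x ^ (-(4 * (k : ℤ)) + 4 - (l : ℤ))) :
    ∃ D E : ℝ, ∀ x : ℝ, x ≠ 0 →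
      u x * deriv f x + deriv u x * f x / 2 - deriv^[5] f x / 4
        = D * x ^ (-(4 * (k : ℤ)) - 5)
          + (-((8 * k + l) / 2) * φ * A
              - ((4 * k - 2 + l) / 4)
                * (4 * c - (4 * (k : ℝ) - 4 + l) * (4 * k - 3 + l)
                    * (4 * k - 1 + l) * (4 * k + l)) * B)
            * x ^ (-(4 * (k : ℤ)) - (l : ℤ) - 1)
          + E * x ^ (-(4 * (k : ℤ)) + 3 - 2 * (l : ℤ)) := by
  refine ⟨-4 * k * c * A - 2 * c * A - A * (∏ i ∈ range 5, (-4 * (k : ℝ) - i)) / 4,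
    (-4 * k + 4 - l) * φ * B - l * φ * B / 2, fun x hx ↦ ?_⟩
  have hdf := iter_deriv_laurent_binomial hf 1 hx
  have hdu := iter_deriv_laurent_binomial hu 1 hx
  have hd5f := iter_deriv_laurent_binomial hf 5 hx
  simp only [Function.iterate_one, prod_range_succ, prod_range_zero] at hdf hdu hd5f ⊢
  rw [hu x hx, hf x hx, hdf, hdu, hd5f]
  simp only [zpow_add₀ hx, zpow_sub₀ hx, zpow_neg, zpow_mul, zpow_natCast, Nat.cast_ofNat,
    zpow_ofNat]
  push_cast
  field_simp
  ring

theorem stmt_18 (c φ A B : ℝ) (k : ℕ) (hk : 1 ≤ k)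
    (l : ℕ) (hl : l ∈ ({1, 2, 3} : Set ℕ))
    (u f : ℝ → ℝ)
    (hu : ∀ x : ℝ, x ≠ 0 → u x = c * x ^ (-4 : ℤ) + φ * x ^ (-(l : ℤ)))
    (hf : ∀ x : ℝ, x ≠ 0 →
      f x = A * x ^ (-(4 * (k : ℤ))) + B * x ^ (-(4 * (k : ℤ)) + 4 - (l : ℤ))) :
    ∃ D E : ℝ, ∀ x : ℝ, x ≠ 0 →
      u x * deriv f x + deriv u x * f x / 2 - deriv^[5] f x / 4
        = D * x ^ (-(4 * (k : ℤ)) - 5)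
          + (-((8 * k + l) / 2) * φ * A
              - ((4 * k - 2 + l) / 4)
                * (4 * c - (4 * (k : ℝ) - 4 + l) * (4 * k - 3 + l)
                    * (4 * k - 1 + l) * (4 * k + l)) * B)
            * x ^ (-(4 * (k : ℤ)) - (l : ℤ) - 1)
          + E * x ^ (-(4 * (k : ℤ)) + 3 - 2 * (l : ℤ)) :=
  stmt_18_general c φ A B k l u f hu hf
end
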